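/- Uniqueness of the squared ReLU normalizer: for x : Fin N → ℝ, N ≥ 1, and l > 0, the function ψ(v) = (1/N)∑ᵢ (max(xᵢ - v, 0)/l)² is continuous, strictly decreasing on (-∞, max xᵢ), tends to +∞ as v → -∞, and is 0 for v ≥ max xᵢ; hence there exists a unique v with ψ(v) = 1. Moreover, if S = {i : xᵢ > v} has size k, then v = (S₁ - sqrt(S₁² - k(S₂ - N l²)))/k, where S₁ = ∑_{i∈S} xᵢ and S₂ = ∑_{i∈S} xᵢ². -/

import Mathlib

/-!
Write `ψ v = (N l²)⁻¹ ∑ᵢ max (xᵢ - v) 0 ²`. Every summand is antitone in `v`, and the one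
belonging to an index attaining `max x` is strictly decreasing below it, so `ψ` is strictly
decreasing on `(-∞, max x)`; with continuity and the limits at both ends, the intermediate value
theorem gives exactly one solution of `ψ v = 1`. On the active set `S` the ReLUs are the
identity, so `ψ v = 1` is the quadratic `k v² - 2 S₁ v + S₂ = N l²`, and `v` is its smaller root
because `S₁ - k v = ∑_{i ∈ S} (xᵢ - v) > 0`.
-/

open Finset Filter

theorem eq_sub_sqrt_div_of_quadratic {k s₁ s₂ c v : ℝ} (hk : 0 < k)
    (hq : s₂ - 2 * s₁ * v + k * v ^ 2 = c) (hv : k * v < s₁) :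
    v = (s₁ - √(s₁ ^ 2 - k * (s₂ - c))) / k := by
  have hdisc : s₁ ^ 2 - k * (s₂ - c) = (s₁ - k * v) ^ 2 := by linear_combination (-k) * hq
  rw [hdisc, Real.sqrt_sq (by linarith)]
  field_simp
  ring

theorem existsUnique_eq_of_strictAntiOn_Iio {f : ℝ → ℝ} {M y : ℝ} (hcont : Continuous f)
    (hanti : StrictAntiOn f (Set.Iio M)) (htop : Tendsto f atBot atTop)
    (hzero : ∀ v, M ≤ v → f v = 0) (hy : 0 < y) : ∃! v, f v = y := by
  have hlt : ∀ v, f v = y → v < M := fun v hv => by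
    by_contra! h
    linarith [hzero v h]
  obtain ⟨a, hay, haM⟩ := ((htop.eventually_ge_atTop y).and (eventually_le_atBot M)).exists
  obtain ⟨v, -, hv⟩ := intermediate_value_Icc' haM hcont.continuousOn
    ⟨(hzero M le_rfl).symm ▸ hy.le, hay⟩
  exact ⟨v, hv, fun w hw => hanti.injOn (hlt w hw) (hlt v hv) (hw.trans hv.symm)⟩

section ReluSqSum

variable {ι : Type*} [Fintype ι]

def reluSqSum (x : ι → ℝ) (v : ℝ) : ℝ := ∑ i, max (x i - v) 0 ^ 2

theorem antitone_max_sub_zero_sq (a : ℝ) : Antitone fun v : ℝ => max (a - v) 0 ^ 2 := by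
  intro u v huv
  dsimp only
  gcongr

theorem strictAntiOn_max_sub_zero_sq (a : ℝ) :
    StrictAntiOn (fun v : ℝ => max (a - v) 0 ^ 2) (Set.Iio a) := by
  intro u _ v (hv : v < a) huv
  dsimp only
  rw [max_eq_left (by linarith), max_eq_left (by linarith)]
  exact pow_lt_pow_left₀ (by linarith) (by linarith) two_ne_zero

theorem tendsto_max_sub_zero_sq_atBot (a : ℝ) :
    Tendsto (fun v : ℝ => max (a - v) 0 ^ 2) atBot atTop := by
  have hlin : Tendsto (fun v : ℝ => a - v) atBot atTop := by
    simpa [sub_eq_add_neg] using tendsto_atTop_add_const_left atBot a tendsto_neg_atBot_atTop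
  exact (tendsto_pow_atTop two_ne_zero).comp
    (tendsto_atTop_mono (fun v => le_max_left _ _) hlin)

variable (x : ι → ℝ)

theorem continuous_reluSqSum : Continuous (reluSqSum x) := by
  unfold reluSqSum
  fun_prop

theorem strictAntiOn_reluSqSum (j : ι) : StrictAntiOn (reluSqSum x) (Set.Iio (x j)) :=
  fun _ hu _ hv huv => sum_lt_sum (fun i _ => antitone_max_sub_zero_sq (x i) huv.le)
    ⟨j, mem_univ j, strictAntiOn_max_sub_zero_sq (x j) hu hv huv⟩

theorem tendsto_reluSqSum_atBot [Nonempty ι] : Tendsto (reluSqSum x) atBot atTop := by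
  obtain ⟨j⟩ := ‹Nonempty ι›
  exact tendsto_atTop_mono
    (fun v => single_le_sum (f := fun i => max (x i - v) 0 ^ 2) (fun i _ => by positivity)
      (mem_univ j))
    (tendsto_max_sub_zero_sq_atBot (x j))

theorem reluSqSum_eq_zero {v : ℝ} (h : ∀ i, x i ≤ v) : reluSqSum x v = 0 :=
  sum_eq_zero fun i _ => by simp [h i]

theorem reluSqSum_eq_sum_filter (v : ℝ) :
    reluSqSum x v = ∑ i with v < x i, (x i - v) ^ 2 := by
  rw [reluSqSum, sum_filter]
  refine sum_congr rfl fun i _ => ?_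
  split_ifs with h
  · rw [max_eq_left (by linarith)]
  · simp [not_lt.mp h]

theorem eq_of_reluSqSum_eq {v c : ℝ} (hc : 0 < c) (h : reluSqSum x v = c) (S : Finset ι)
    (hS : S = univ.filter (fun i => v < x i)) :
    v = ((∑ i ∈ S, x i) - √((∑ i ∈ S, x i) ^ 2
      - (S.card : ℝ) * ((∑ i ∈ S, x i ^ 2) - c))) / (S.card : ℝ) := by
  rw [reluSqSum_eq_sum_filter, ← hS] at h
  have hSne : S.Nonempty := by
    by_contra! hS0
    rw [hS0, sum_empty] at h
    exact hc.ne h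
  refine eq_sub_sqrt_div_of_quadratic (by exact_mod_cast hSne.card_pos) ?_ ?_
  · rw [← h]
    simp only [sub_sq, sum_add_distrib, sum_sub_distrib, sum_const, nsmul_eq_mul, ← sum_mul,
      ← mul_sum]
  · have hpos : 0 < ∑ i ∈ S, (x i - v) :=
      sum_pos (fun i hi => sub_pos.mpr (by simpa [hS] using hi)) hSne
    simp only [sum_sub_distrib, sum_const, nsmul_eq_mul] at hpos
    linarith

end ReluSqSum

/-- Uniqueness and closed form of the squared ReLU normalizer:
`ψ(v) = (1/N) ∑ᵢ (max(xᵢ - v, 0)/l)²` is continuous, strictly decreasing on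
`(-∞, max xᵢ)`, tends to `+∞` as `v → -∞`, vanishes for `v ≥ max xᵢ`, hence there is a
unique `v` with `ψ(v) = 1`; moreover if the active set `S = {i : xᵢ > v}` has size `k`
then `v = (S₁ - √(S₁² - k(S₂ - N l²)))/k` with `S₁ = ∑_{i∈S} xᵢ`, `S₂ = ∑_{i∈S} xᵢ²`. -/
theorem stmt_16 (N : ℕ) (hN : 1 ≤ N) (x : Fin N → ℝ) (l : ℝ) (hl : 0 < l)
    (ψ : ℝ → ℝ) (hψ : ∀ v, ψ v = ((1 : ℝ) / N) * ∑ i, (max (x i - v) 0 / l) ^ 2)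
    (M : ℝ) (hM : M = Finset.univ.sup' ⟨⟨0, hN⟩, Finset.mem_univ _⟩ x) :
    Continuous ψ ∧
    StrictAntiOn ψ (Set.Iio M) ∧
    Tendsto ψ atBot atTop ∧
    (∀ v, M ≤ v → ψ v = 0) ∧
    (∃! v : ℝ, ψ v = 1) ∧
    (∀ v : ℝ, ψ v = 1 →
      ∀ S : Finset (Fin N), S = Finset.univ.filter (fun i => v < x i) →
        v = ((∑ i ∈ S, x i) -
              Real.sqrt ((∑ i ∈ S, x i) ^ 2
                - (S.card : ℝ) * ((∑ i ∈ S, (x i) ^ 2) - N * l ^ 2))) / (S.card : ℝ)) := by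
  have : Nonempty (Fin N) := ⟨⟨0, hN⟩⟩
  have hc : 0 < (N * l ^ 2 : ℝ) := by positivity
  have hψ' : ψ = fun v => (N * l ^ 2)⁻¹ * reluSqSum x v := by
    funext v
    rw [hψ, reluSqSum, mul_sum, mul_sum]
    refine sum_congr rfl fun i _ => ?_
    field_simp
  obtain ⟨j, -, hj⟩ := exists_mem_eq_sup' ⟨⟨0, hN⟩, mem_univ _⟩ x
  have hMj : M = x j := hM.trans hj
  have hzero : ∀ v, M ≤ v → ψ v = 0 := fun v hv => by
    simp only [hψ', reluSqSum_eq_zero x fun i => (hM ▸ le_sup' x (mem_univ i)).trans hv, mul_zero]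
  have hcont : Continuous ψ := hψ' ▸ continuous_const.mul (continuous_reluSqSum x)
  have hanti : StrictAntiOn ψ (Set.Iio M) := by
    rw [hψ', hMj]
    exact fun u hu v hv huv =>
      mul_lt_mul_of_pos_left (strictAntiOn_reluSqSum x j hu hv huv) (inv_pos.mpr hc)
  have htop : Tendsto ψ atBot atTop :=
    hψ' ▸ (tendsto_reluSqSum_atBot x).const_mul_atTop (inv_pos.mpr hc)
  refine ⟨hcont, hanti, htop, hzero,
    existsUnique_eq_of_strictAntiOn_Iio hcont hanti htop hzero one_pos, fun v hv S hS => ?_⟩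
  refine eq_of_reluSqSum_eq x hc ?_ S hS
  rw [hψ'] at hv
  field_simp at hv
  exact hv
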